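/- arXiv:2101.12141 — 2 statements merged into one kernel-verified Lean document; each statement's English description precedes it below -/
import Mathlib

section
/- Let (n_1,...,n_k) be a partition of n and let T be a block matrix with upper triangular Toeplitz blocks. Define the k×k matrix Π(T) by Π(T)_{i,j} = t^{(1)}_{i,j} if n_i = n_j and 0 otherwise, where t^{(1)}_{i,j} is the leading Toeplitz entry of block T_{i,j}. Then T and Π(T) have the same set of eigenvalues (the eigenvalues of T are exactly the eigenvalues of Π(T), each with multiplicity multiplied appropriately: T is similar via a permutation to a direct sum of matrices of the form T̃_s ⊗ I_{s}). -/
/-!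
Grade the index `(i, a)` of `T` (row `a` of block `i`) by `2a - nᵢ`. The Toeplitz shape of
the blocks makes `T` block upper triangular for this grading, and between indices of equal grade
`T` agrees with the ampliation `Π(T) ⊗ I`, whose `((i, a), (j, b))` entry is `Π(T)ᵢⱼ` if
`a = b` and `0` otherwise. Hence `det (μ - T) = det ((μ - Π(T)) ⊗ I)`. Since `μ - Π(T)` only
couples blocks of equal size, its ampliation is singular exactly when it is: a kernel vector of
the ampliation restricts to one of `μ - Π(T)` on any level `a` where it is nonzero, and a kernel
vector of `μ - Π(T)` extends by zero from level `0`.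
-/

open Matrix

/-- A rectangular `p × q` matrix is upper triangular Toeplitz (top-right aligned when
`p ≤ q`, top-left aligned when `q ≤ p`). -/
def IsUpperTriToeplitz {p q : ℕ} (M : Matrix (Fin p) (Fin q) ℂ) : Prop :=
  ∃ t : ℤ → ℂ, ∀ (a : Fin p) (b : Fin q),
    M a b = if max 0 ((q : ℤ) - (p : ℤ)) ≤ (b : ℤ) - (a : ℤ) then t ((b : ℤ) - (a : ℤ)) else 0

theorem Matrix.mem_spectrum_iff_det_eq_zero {m K : Type*} [Fintype m] [DecidableEq m] [Field K]
    {A : Matrix m m K} {μ : K} : μ ∈ spectrum K A ↔ (algebraMap K _ μ - A).det = 0 := by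
  rw [spectrum.mem_iff, isUnit_iff_isUnit_det, isUnit_iff_ne_zero, not_not]

theorem Matrix.BlockTriangular.det_eq_det_of_apply_eq {m α R : Type*} [Fintype m]
    [DecidableEq m] [CommRing R] [LinearOrder α] {M N : Matrix m m R} {b : m → α}
    (hM : M.BlockTriangular b) (hN : N.BlockTriangular b)
    (h : ∀ p q, b p = b q → M p q = N p q) : M.det = N.det := by
  rw [hM.det, hN.det]
  refine Finset.prod_congr rfl fun a _ => congrArg det ?_
  ext p q
  exact h p q (p.2.trans q.2.symm)

namespace IsUpperTriToeplitz

variable {p q : ℕ} {M : Matrix (Fin p) (Fin q) ℂ}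

theorem apply_eq_zero (hM : IsUpperTriToeplitz M) {a : Fin p} {b : Fin q}
    (h : (b : ℤ) - (a : ℤ) < max 0 ((q : ℤ) - (p : ℤ))) : M a b = 0 := by
  obtain ⟨t, ht⟩ := hM
  rw [ht, if_neg h.not_ge]

theorem apply_eq_apply (hM : IsUpperTriToeplitz M) {a a' : Fin p} {b b' : Fin q}
    (h : max 0 ((q : ℤ) - (p : ℤ)) ≤ (b : ℤ) - (a : ℤ))
    (hd : (b : ℤ) - (a : ℤ) = (b' : ℤ) - (a' : ℤ)) : M a b = M a' b' := by
  obtain ⟨t, ht⟩ := hM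
  rw [ht, ht, if_pos h, if_pos (hd ▸ h), hd]

end IsUpperTriToeplitz

def IsBlockToeplitz {ι : Type*} (n : ι → ℕ)
    (T : Matrix (Σ i, Fin (n i)) (Σ i, Fin (n i)) ℂ) : Prop :=
  ∀ i j, IsUpperTriToeplitz (of fun (a : Fin (n i)) (b : Fin (n j)) => T ⟨i, a⟩ ⟨j, b⟩)

namespace BlockToeplitz

variable {ι K : Type*} {n : ι → ℕ}

def weight (n : ι → ℕ) (p : Σ i, Fin (n i)) : ℤ := 2 * (p.2 : ℤ) - n p.1

def ampliate [Zero K] (n : ι → ℕ) (A : Matrix ι ι K) :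
    Matrix (Σ i, Fin (n i)) (Σ i, Fin (n i)) K :=
  of fun p q => if (p.2 : ℕ) = q.2 then A p.1 q.1 else 0

theorem ampliate_sub [AddGroup K] (A B : Matrix ι ι K) :
    ampliate n (A - B) = ampliate n A - ampliate n B := by
  ext p q
  by_cases h : (p.2 : ℕ) = q.2 <;> simp [ampliate, h]

theorem ampliate_algebraMap [Fintype ι] [DecidableEq ι] [CommSemiring K] (μ : K) :
    ampliate n (algebraMap K (Matrix ι ι K) μ) =
      algebraMap K (Matrix (Σ i, Fin (n i)) (Σ i, Fin (n i)) K) μ := by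
  ext ⟨i, a⟩ ⟨j, b⟩
  by_cases hij : i = j
  · subst hij
    simp [ampliate, algebraMap_eq_diagonal, diagonal_apply, Fin.val_inj]
  · simp [ampliate, algebraMap_eq_diagonal, diagonal_apply, hij]

theorem blockTriangular_ampliate [Zero K] {A : Matrix ι ι K}
    (hA : ∀ i j, A i j ≠ 0 → n i = n j) : (ampliate n A).BlockTriangular (weight n) := by
  rintro ⟨i, a⟩ ⟨j, b⟩ hlt
  by_contra hne
  simp only [ampliate, of_apply, ite_eq_right_iff, not_forall] at hne
  obtain ⟨hab, hA'⟩ := hne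
  have := hA i j hA'
  simp only [weight] at hlt
  omega

def slice [Zero K] (v : (Σ i, Fin (n i)) → K) (a : ℕ) (i : ι) : K :=
  if h : a < n i then v ⟨i, ⟨a, h⟩⟩ else 0

theorem ampliate_mulVec_apply [Fintype ι] [NonUnitalNonAssocSemiring K] (A : Matrix ι ι K)
    (v : (Σ i, Fin (n i)) → K) (i : ι) (a : Fin (n i)) :
    (ampliate n A *ᵥ v) ⟨i, a⟩ = (A *ᵥ slice v a) i := by
  simp only [mulVec, dotProduct, ← Finset.univ_sigma_univ, Finset.sum_sigma]
  refine Finset.sum_congr rfl fun j _ => ?_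
  by_cases h : (a : ℕ) < n j
  · rw [Finset.sum_eq_single ⟨a, h⟩]
    · simp [ampliate, slice, h]
    · intro b _ hb
      simp only [ampliate, of_apply, ite_mul, zero_mul, ite_eq_right_iff]
      exact fun hab => absurd (Fin.ext hab.symm) hb
    · simp
  · refine (Finset.sum_eq_zero fun b _ => ?_).trans (by simp [slice, h])
    have : (a : ℕ) ≠ b := by omega
    simp [ampliate, this]

theorem det_ampliate_eq_zero_iff [Fintype ι] [DecidableEq ι] [Field K] (hn : ∀ i, 0 < n i)
    {A : Matrix ι ι K} (hA : ∀ i j, A i j ≠ 0 → n i = n j) :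
    (ampliate n A).det = 0 ↔ A.det = 0 := by
  rw [← exists_mulVec_eq_zero_iff, ← exists_mulVec_eq_zero_iff]
  constructor
  · rintro ⟨v, hv, hAv⟩
    obtain ⟨⟨i₀, a₀⟩, hi₀⟩ := Function.ne_iff.mp hv
    refine ⟨slice v a₀, Function.ne_iff.mpr ⟨i₀, by simpa [slice] using hi₀⟩,
      funext fun i => ?_⟩
    by_cases h : (a₀ : ℕ) < n i
    · simpa [ampliate_mulVec_apply] using congrFun hAv ⟨i, ⟨a₀, h⟩⟩
    · refine Finset.sum_eq_zero fun j _ => ?_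
      change A i j * slice v a₀ j = 0
      by_cases hij : A i j = 0
      · rw [hij, zero_mul]
      · have : ¬ (a₀ : ℕ) < n j := hA i j hij ▸ h
        simp [slice, this]
  · rintro ⟨u, hu, hAu⟩
    obtain ⟨i₀, hi₀⟩ := Function.ne_iff.mp hu
    let v : (Σ i, Fin (n i)) → K := fun p => if (p.2 : ℕ) = 0 then u p.1 else 0
    have hslice : ∀ a : ℕ, slice v a = if a = 0 then u else 0 := by
      rintro (_ | a) <;> ext j <;> simp [v, slice, hn j]
    refine ⟨v, Function.ne_iff.mpr ⟨⟨i₀, ⟨0, hn i₀⟩⟩, by simpa [v] using hi₀⟩,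
      funext fun ⟨i, a⟩ => ?_⟩
    rw [ampliate_mulVec_apply, hslice]
    split_ifs <;> simp [hAu]

def leadingPart [Zero K] (hn : ∀ i, 0 < n i) (T : Matrix (Σ i, Fin (n i)) (Σ i, Fin (n i)) K) :
    Matrix ι ι K :=
  of fun i j => if n i = n j then T ⟨i, ⟨0, hn i⟩⟩ ⟨j, ⟨0, hn j⟩⟩ else 0

theorem algebraMap_sub_leadingPart_apply_ne_zero [Fintype ι] [DecidableEq ι] [Field K]
    (hn : ∀ i, 0 < n i) (T : Matrix (Σ i, Fin (n i)) (Σ i, Fin (n i)) K) (μ : K) {i j : ι}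
    (h : (algebraMap K (Matrix ι ι K) μ - leadingPart hn T) i j ≠ 0) : n i = n j := by
  by_contra hij
  have hne : i ≠ j := fun e => hij (e ▸ rfl)
  simp [algebraMap_eq_diagonal, diagonal_apply_ne _ hne, leadingPart, hij] at h

end BlockToeplitz

namespace IsBlockToeplitz

open BlockToeplitz

variable {ι : Type*} {n : ι → ℕ} {T : Matrix (Σ i, Fin (n i)) (Σ i, Fin (n i)) ℂ}

theorem blockTriangular_weight (hT : IsBlockToeplitz n T) : T.BlockTriangular (weight n) := by
  rintro ⟨i, a⟩ ⟨j, b⟩ hlt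
  simp only [weight] at hlt
  exact (hT i j).apply_eq_zero (by omega)

theorem apply_eq_ampliate_leadingPart (hn : ∀ i, 0 < n i) (hT : IsBlockToeplitz n T)
    {p q : Σ i, Fin (n i)} (h : weight n p = weight n q) :
    T p q = ampliate n (leadingPart hn T) p q := by
  obtain ⟨i, a⟩ := p
  obtain ⟨j, b⟩ := q
  simp only [weight] at h
  by_cases hab : (a : ℕ) = b
  · have hij : n i = n j := by omega
    simp only [ampliate, leadingPart, of_apply, if_pos hab, if_pos hij]
    exact (hT i j).apply_eq_apply (by omega) (by simp; omega)
  · simp only [ampliate, of_apply, if_neg hab]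
    exact (hT i j).apply_eq_zero (by omega)

theorem det_algebraMap_sub [Fintype ι] [DecidableEq ι] (hn : ∀ i, 0 < n i)
    (hT : IsBlockToeplitz n T) (μ : ℂ) :
    (algebraMap ℂ _ μ - T).det =
      (ampliate n (algebraMap ℂ (Matrix ι ι ℂ) μ - leadingPart hn T)).det := by
  have hμT : (algebraMap ℂ _ μ - T).BlockTriangular (weight n) := by
    rw [algebraMap_eq_diagonal]
    exact (blockTriangular_diagonal _).sub hT.blockTriangular_weight
  refine BlockTriangular.det_eq_det_of_apply_eq hμT
    (blockTriangular_ampliate fun i j => algebraMap_sub_leadingPart_apply_ne_zero hn T μ)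
    fun p q h => ?_
  rw [ampliate_sub, ampliate_algebraMap, Matrix.sub_apply, Matrix.sub_apply,
    hT.apply_eq_ampliate_leadingPart hn h]

end IsBlockToeplitz

/-- For a block matrix `T` with upper triangular Toeplitz blocks, the `k × k` matrix
`Π(T)` of leading entries of the square blocks (and zeros elsewhere) has the same set of
eigenvalues as `T`. -/
theorem spectrum_eq_spectrum_pi_of_blockToeplitz
    {k : ℕ} (n : Fin k → ℕ) (hn : ∀ i, 0 < n i)
    (T : Matrix ((i : Fin k) × Fin (n i)) ((i : Fin k) × Fin (n i)) ℂ)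
    (hT : ∀ i j : Fin k, IsUpperTriToeplitz
      (Matrix.of fun (a : Fin (n i)) (b : Fin (n j)) => T ⟨i, a⟩ ⟨j, b⟩)) :
    spectrum ℂ T =
      spectrum ℂ (Matrix.of fun i j : Fin k =>
        if n i = n j then T ⟨i, ⟨0, hn i⟩⟩ ⟨j, ⟨0, hn j⟩⟩ else 0) := by
  change spectrum ℂ T = spectrum ℂ (BlockToeplitz.leadingPart hn T)
  ext μ
  rw [mem_spectrum_iff_det_eq_zero, mem_spectrum_iff_det_eq_zero,
    IsBlockToeplitz.det_algebraMap_sub hn hT μ, BlockToeplitz.det_ampliate_eq_zero_iff hn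
      fun i j => BlockToeplitz.algebraMap_sub_leadingPart_apply_ne_zero hn T μ]
end

section
/- Let A ⊆ H^n, suppose S in the real span of A has maximal rank among all elements of the real span of A, and suppose A is SDC. Then the range of every A ∈ A is contained in the range of S. -/
/-!
Congruence by `P` turns every element `T` of the real span into a diagonal matrix `Pᴴ T P`, whose
rank is its number of nonzero diagonal entries. If some index carried a nonzero entry of `A` but a
zero entry of `S`, then `S + t • A` for all but finitely many real `t` would keep every nonzero
entry of `S` and gain that one, contradicting maximality of `rank S`. Hence the diagonal of `Pᴴ A P`
is supported where that of `Pᴴ S P` is, so `Pᴴ A P = Pᴴ S P * E` for a diagonal `E`, and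
`A = S * (P E P⁻¹)`.
-/

theorem Function.exists_support_ssubset_support_add_smul {ι 𝕜 V : Type*} [Finite ι] [Field 𝕜]
    [Infinite 𝕜] [AddCommGroup V] [Module 𝕜 V] {s a : ι → V} (h : ∃ i, s i = 0 ∧ a i ≠ 0) :
    ∃ t : 𝕜, Function.support s ⊂ Function.support (s + t • a) := by
  obtain ⟨i₀, hs₀, ha₀⟩ := h
  -- each coordinate with `a i ≠ 0` vanishes for at most one `t`
  have hbad : ({0} ∪ ⋃ i, {t : 𝕜 | a i ≠ 0 ∧ s i + t • a i = 0}).Finite :=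
    (Set.finite_singleton 0).union <| Set.finite_iUnion fun i =>
      Set.Subsingleton.finite fun t ht t' ht' =>
        smul_left_injective 𝕜 ht.1 (add_left_cancel (ht.2.trans ht'.2.symm))
  obtain ⟨t, ht⟩ := hbad.infinite_compl.nonempty
  simp only [Set.mem_compl_iff, Set.mem_union, Set.mem_singleton_iff, Set.mem_iUnion,
    Set.mem_ofPred_eq, not_or, not_exists, not_and] at ht
  refine ⟨t, fun i hi => ?_, fun hsub => hsub ?_ hs₀⟩
  · by_cases ha : a i = 0
    · simpa [ha] using hi
    · exact ht.2 i ha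
  · simp [hs₀, ht.1, ha₀]

namespace Matrix

theorem isDiag_mul_mul_of_mem_span {n 𝕜 K : Type*} [Fintype n] [CommSemiring 𝕜] [CommSemiring K]
    [Algebra 𝕜 K] {𝒜 : Set (Matrix n n K)} {Q R : Matrix n n K} (h : ∀ A ∈ 𝒜, (Q * A * R).IsDiag)
    {T : Matrix n n K} (hT : T ∈ Submodule.span 𝕜 𝒜) : (Q * T * R).IsDiag := by
  induction hT using Submodule.span_induction with
  | mem A hA => exact h A hA
  | zero => simp
  | add A B _ _ hA hB => simpa [Matrix.mul_add, Matrix.add_mul] using hA.add hB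
  | smul c A _ hA => simpa [Matrix.mul_smul, Matrix.smul_mul] using hA.smul c

variable {n K : Type*} [Fintype n] [DecidableEq n] [Field K]

theorem rank_eq_ncard_support_diag_of_isDiag_mul_mul {Q T R : Matrix n n K} (hQ : IsUnit Q)
    (hR : IsUnit R) (hD : (Q * T * R).IsDiag) :
    T.rank = (Function.support (Q * T * R).diag).ncard := by
  classical
  calc T.rank = (Q * T * R).rank := by
        rw [rank_mul_eq_left_of_isUnit_det _ _ ((isUnit_iff_isUnit_det R).mp hR),
          rank_mul_eq_right_of_isUnit_det _ _ ((isUnit_iff_isUnit_det Q).mp hQ)]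
    _ = (diagonal (Q * T * R).diag).rank := by rw [hD.diagonal_diag]
    _ = _ := by
        rw [rank_diagonal, ← Nat.card_eq_fintype_card]
        rfl

theorem diagonal_eq_diagonal_mul_diagonal_div {d e : n → K} (h : ∀ i, e i = 0 → d i = 0) :
    diagonal d = diagonal e * diagonal (d / e) := by
  rw [diagonal_mul_diagonal]
  congr 1
  funext i
  by_cases he : e i = 0
  · simp [he, h i he]
  · exact (mul_div_cancel₀ (d i) he).symm

theorem range_mulVecLin_le_of_isDiag_mul_mul {Q R A S : Matrix n n K} (hQ : IsUnit Q)
    (hR : IsUnit R) (hA : (Q * A * R).IsDiag) (hS : (Q * S * R).IsDiag)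
    (hsupp : ∀ i, (Q * S * R) i i = 0 → (Q * A * R) i i = 0) :
    LinearMap.range A.mulVecLin ≤ LinearMap.range S.mulVecLin := by
  set E := diagonal ((Q * A * R).diag / (Q * S * R).diag)
  have hfac : Q * A * R = Q * S * R * E := calc
    Q * A * R = diagonal (Q * A * R).diag := hA.diagonal_diag.symm
    _ = diagonal (Q * S * R).diag * E := diagonal_eq_diagonal_mul_diagonal_div hsupp
    _ = Q * S * R * E := by rw [hS.diagonal_diag]
  have hA_eq : A = S * (R * E * R⁻¹) := by
    refine hQ.mul_left_cancel (hR.mul_right_cancel ?_)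
    rw [hfac]
    simp only [Matrix.mul_assoc, nonsing_inv_mul R ((isUnit_iff_isUnit_det R).mp hR),
      Matrix.mul_one]
  rw [hA_eq, mulVecLin_mul]
  exact LinearMap.range_comp_le_range _ _

end Matrix

open Matrix

theorem range_le_range_of_maxRank_of_sdc_general
    {n : ℕ} (𝒜 : Set (Matrix (Fin n) (Fin n) ℂ))
    (S : Matrix (Fin n) (Fin n) ℂ) (hSmem : S ∈ Submodule.span ℝ 𝒜)
    (hSmax : ∀ T ∈ Submodule.span ℝ 𝒜, T.rank ≤ S.rank)
    (P : Matrix (Fin n) (Fin n) ℂ) (hP : IsUnit P)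
    (hdiag : ∀ A ∈ 𝒜, (Pᴴ * A * P).IsDiag) :
    ∀ A ∈ 𝒜, LinearMap.range A.mulVecLin ≤ LinearMap.range S.mulVecLin := by
  intro A hA
  have hAmem : A ∈ Submodule.span ℝ 𝒜 := Submodule.subset_span hA
  have hPH : IsUnit Pᴴ := by simpa only [star_eq_conjTranspose] using hP.star
  have hD : ∀ T ∈ Submodule.span ℝ 𝒜, (Pᴴ * T * P).IsDiag := fun _ hT =>
    isDiag_mul_mul_of_mem_span hdiag hT
  refine range_mulVecLin_le_of_isDiag_mul_mul hPH hP (hD A hAmem) (hD S hSmem) fun i hSi => ?_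
  by_contra hAi
  obtain ⟨t, ht⟩ := Function.exists_support_ssubset_support_add_smul (𝕜 := ℝ)
    (s := (Pᴴ * S * P).diag) (a := (Pᴴ * A * P).diag) ⟨i, hSi, hAi⟩
  have hTmem : S + t • A ∈ Submodule.span ℝ 𝒜 := add_mem hSmem (Submodule.smul_mem _ t hAmem)
  have hdiagT : (Pᴴ * (S + t • A) * P).diag = (Pᴴ * S * P).diag + t • (Pᴴ * A * P).diag := by
    rw [Matrix.mul_add, Matrix.add_mul, Matrix.mul_smul, Matrix.smul_mul, diag_add, diag_smul]
  refine (hSmax _ hTmem).not_gt ?_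
  rw [rank_eq_ncard_support_diag_of_isDiag_mul_mul hPH hP (hD S hSmem),
    rank_eq_ncard_support_diag_of_isDiag_mul_mul hPH hP (hD _ hTmem), hdiagT]
  exact Set.ncard_lt_ncard ht

/-- If `S` is a max-rank element of the real span of an SDC set `𝒜` of Hermitian
matrices, then the range of every `A ∈ 𝒜` is contained in the range of `S`. -/
theorem range_le_range_of_maxRank_of_sdc
    {n : ℕ} (𝒜 : Set (Matrix (Fin n) (Fin n) ℂ))
    (hherm : ∀ A ∈ 𝒜, A.IsHermitian)
    (S : Matrix (Fin n) (Fin n) ℂ) (hSmem : S ∈ Submodule.span ℝ 𝒜)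
    (hSmax : ∀ T ∈ Submodule.span ℝ 𝒜, T.rank ≤ S.rank)
    (P : Matrix (Fin n) (Fin n) ℂ) (hP : IsUnit P)
    (hdiag : ∀ A ∈ 𝒜, (Pᴴ * A * P).IsDiag) :
    ∀ A ∈ 𝒜, LinearMap.range A.mulVecLin ≤ LinearMap.range S.mulVecLin :=
  range_le_range_of_maxRank_of_sdc_general 𝒜 S hSmem hSmax P hP hdiag
end
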